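/- arXiv:2407.02344 — 7 statements merged into one kernel-verified Lean document; each statement's English description precedes it below -/
import Mathlib

section
/- Let m₁ and m₂ be positive integers with m₁ < m₂ < 2m₁. If A ⊆ Z_{m₁} satisfies σ_A(n) ≥ 1 for all n ∈ Z_{m₁}, then there exists B ⊆ Z_{m₂} with |B| ≤ 2|A| such that σ_B(n) ≥ 1 for all n ∈ Z_{m₂}. -/
theorem additive_basis_transfer (m₁ m₂ : ℕ) (hm₁ : 0 < m₁) (h₁ : m₁ < m₂) (h₂ : m₂ < 2 * m₁)
    (A : Finset (ZMod m₁))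
    (hA : ∀ n : ZMod m₁, 1 ≤ ((A ×ˢ A).filter (fun p => p.1 + p.2 = n)).card) :
    ∃ B : Finset (ZMod m₂), B.card ≤ 2 * A.card ∧
      ∀ n : ZMod m₂, 1 ≤ ((B ×ˢ B).filter (fun p => p.1 + p.2 = n)).card := by
  haveI : NeZero m₁ := ⟨by omega⟩
  haveI : NeZero m₂ := ⟨by omega⟩
  set r : ℕ := m₂ - m₁ with hr
  set f : ZMod m₁ → ZMod m₂ := fun z => ((z.val : ℕ) : ZMod m₂) with hf
  set g : ZMod m₁ → ZMod m₂ := fun z => ((z.val + r : ℕ) : ZMod m₂) with hg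
  refine ⟨A.image f ∪ A.image g, ?_, ?_⟩
  · calc (A.image f ∪ A.image g).card
        ≤ (A.image f).card + (A.image g).card := Finset.card_union_le _ _
      _ ≤ A.card + A.card := add_le_add Finset.card_image_le Finset.card_image_le
      _ = 2 * A.card := (two_mul _).symm
  · intro n
    rw [Finset.one_le_card]
    set N := n.val with hN
    have hNlt : N < m₂ := ZMod.val_lt n
    have hNn : ((N : ℕ) : ZMod m₂) = n := ZMod.natCast_zmod_val n
    set t : ℕ := if N < m₁ then N else N - r with ht
    have htlt : t < m₁ := by
      rw [ht]; split <;> omega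
    have h1 := hA (t : ZMod m₁)
    rw [Finset.one_le_card] at h1
    obtain ⟨⟨a, b⟩, hab⟩ := h1
    simp only [Finset.mem_filter, Finset.mem_product] at hab
    obtain ⟨⟨haA, hbA⟩, habt⟩ := hab
    have hav : a.val < m₁ := ZMod.val_lt a
    have hbv : b.val < m₁ := ZMod.val_lt b
    have hsum : (a.val + b.val) % m₁ = t := by
      have h3 := ZMod.val_add a b
      rw [habt, ZMod.val_cast_of_lt htlt] at h3
      exact h3.symm
    have hcases : a.val + b.val = t ∨ a.val + b.val = t + m₁ := by
      rcases Nat.lt_or_ge (a.val + b.val) m₁ with h | h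
      · left; rwa [Nat.mod_eq_of_lt h] at hsum
      · right
        have h2 : a.val + b.val - m₁ < m₁ := by omega
        rw [Nat.mod_eq_sub_mod h, Nat.mod_eq_of_lt h2] at hsum
        omega
    have hfa : f a ∈ A.image f ∪ A.image g :=
      Finset.mem_union_left _ (Finset.mem_image_of_mem f haA)
    have hfb : f b ∈ A.image f ∪ A.image g :=
      Finset.mem_union_left _ (Finset.mem_image_of_mem f hbA)
    have hga : g a ∈ A.image f ∪ A.image g :=
      Finset.mem_union_right _ (Finset.mem_image_of_mem g haA)
    have hgb : g b ∈ A.image f ∪ A.image g :=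
      Finset.mem_union_right _ (Finset.mem_image_of_mem g hbA)
    have key : ∀ u v : ℕ, u + v = N ∨ u + v = N + m₂ →
        ((u : ZMod m₂) + (v : ZMod m₂) = n) := by
      intro u v huv
      rcases huv with huv | huv
      · rw [← Nat.cast_add, huv, hNn]
      · rw [← Nat.cast_add, huv, Nat.cast_add, ZMod.natCast_self, add_zero, hNn]
    by_cases hNm : N < m₁
    · have htN : t = N := by rw [ht, if_pos hNm]
      rcases hcases with hc | hc
      · refine ⟨(f a, f b), ?_⟩
        simp only [Finset.mem_filter, Finset.mem_product]
        exact ⟨⟨hfa, hfb⟩, key _ _ (Or.inl (by omega))⟩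
      · refine ⟨(g a, f b), ?_⟩
        simp only [Finset.mem_filter, Finset.mem_product]
        refine ⟨⟨hga, hfb⟩, key _ _ (Or.inr (by omega))⟩
    · have htN : t = N - r := by rw [ht, if_neg hNm]
      have hrN : r < N := by omega
      rcases hcases with hc | hc
      · refine ⟨(g a, f b), ?_⟩
        simp only [Finset.mem_filter, Finset.mem_product]
        exact ⟨⟨hga, hfb⟩, key _ _ (Or.inl (by omega))⟩
      · refine ⟨(g a, g b), ?_⟩
        simp only [Finset.mem_filter, Finset.mem_product]
        exact ⟨⟨hga, hgb⟩, key _ _ (Or.inr (by omega))⟩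
end

section
/- Let m be a positive integer and p a prime with p² + p + 1 < m < 2(p² + p + 1). If A ⊆ Z_{p²+p+1} satisfies δ_A(n) ≥ 1 for all n ∈ Z_{p²+p+1}, then there exists B ⊆ Z_m with |B| ≤ 2|A| such that δ_B(n) ≥ 1 for all n ∈ Z_m. -/
theorem subtractive_basis_transfer (p m : ℕ) (hp : p.Prime)
    (h₁ : p ^ 2 + p + 1 < m) (h₂ : m < 2 * (p ^ 2 + p + 1))
    (A : Finset (ZMod (p ^ 2 + p + 1)))
    (hA : ∀ n : ZMod (p ^ 2 + p + 1), 1 ≤ ((A ×ˢ A).filter (fun q => q.1 - q.2 = n)).card) :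
    ∃ B : Finset (ZMod m), B.card ≤ 2 * A.card ∧
      ∀ n : ZMod m, 1 ≤ ((B ×ˢ B).filter (fun q => q.1 - q.2 = n)).card := by
  have hq : 0 < p ^ 2 + p + 1 := by positivity
  haveI : NeZero (p ^ 2 + p + 1) := ⟨hq.ne'⟩
  haveI : NeZero m := ⟨by omega⟩
  -- Step 1: A.card ≥ p + 1
  have hAcard : p + 1 ≤ A.card := by
    by_contra h
    push_neg at h
    have h1 : (A ×ˢ A).card =
        ∑ n : ZMod (p ^ 2 + p + 1), ((A ×ˢ A).filter (fun q => q.1 - q.2 = n)).card :=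
      Finset.card_eq_sum_card_fiberwise (fun x _ => Finset.mem_univ _)
    have h2 : p ^ 2 + p + 1 ≤
        ∑ n : ZMod (p ^ 2 + p + 1), ((A ×ˢ A).filter (fun q => q.1 - q.2 = n)).card := by
      calc p ^ 2 + p + 1 = Fintype.card (ZMod (p ^ 2 + p + 1)) := (ZMod.card _).symm
        _ = ∑ _n : ZMod (p ^ 2 + p + 1), 1 := by
            simp [Finset.card_univ]
        _ ≤ _ := Finset.sum_le_sum (fun n _ => hA n)
    rw [← h1, Finset.card_product] at h2
    have hle : A.card ≤ p := by omega
    nlinarith [hle]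
  -- The ruler set
  set S : Finset ℕ :=
    Finset.range (p + 1) ∪ (Finset.range (p + 1)).image (fun k => (k + 1) * (p + 1)) with hS
  have hmem1 : ∀ j : ℕ, j ≤ p → j ∈ S := by
    intro j hj
    exact Finset.mem_union_left _ (Finset.mem_range.mpr (by omega))
  have hmem2 : ∀ k : ℕ, k ≤ p + 1 → k * (p + 1) ∈ S := by
    intro k hk
    rcases Nat.eq_zero_or_pos k with hk0 | hk0
    · subst hk0; simpa using hmem1 0 (by omega)
    · refine Finset.mem_union_right _ ?_
      exact Finset.mem_image.mpr ⟨k - 1, Finset.mem_range.mpr (by omega), by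
        congr 1; omega⟩
  -- key arithmetic lemma
  have key : ∀ r : ℕ, r ≤ (p + 1) ^ 2 → ∃ k j, k ≤ p + 1 ∧ j ≤ p ∧ k * (p + 1) = r + j := by
    intro r hr
    refine ⟨(r + p) / (p + 1), (r + p) / (p + 1) * (p + 1) - r, ?_, ?_, ?_⟩
    · have hlt : r + p < (p + 2) * (p + 1) := by nlinarith
      have := (Nat.div_lt_iff_lt_mul (by omega : 0 < p + 1)).mpr hlt
      omega
    · have h1 : (r + p) / (p + 1) * (p + 1) ≤ r + p := Nat.div_mul_le_self _ _
      omega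
    · have h1 : (r + p) / (p + 1) * (p + 1) ≤ r + p := Nat.div_mul_le_self _ _
      have h2 : (r + p) / (p + 1) * (p + 1) + (r + p) % (p + 1) = r + p := by
        rw [mul_comm]; exact Nat.div_add_mod (r + p) (p + 1)
      have h3 : (r + p) % (p + 1) < p + 1 := Nat.mod_lt _ (by omega)
      omega
  refine ⟨S.image (Nat.cast : ℕ → ZMod m), ?_, ?_⟩
  · calc (S.image (Nat.cast : ℕ → ZMod m)).card ≤ S.card := Finset.card_image_le
      _ ≤ (Finset.range (p + 1)).card
          + ((Finset.range (p + 1)).image (fun k => (k + 1) * (p + 1))).card :=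
        Finset.card_union_le _ _
      _ ≤ (p + 1) + (p + 1) := by
        gcongr
        · simp
        · exact (Finset.card_image_le).trans (by simp)
      _ ≤ 2 * A.card := by omega
  · intro n
    set r := n.val with hr
    have hrm : r < m := ZMod.val_lt n
    have hrn : (r : ZMod m) = n := ZMod.natCast_rightInverse n
    rw [Finset.one_le_card]
    have hsq : (p + 1) ^ 2 = p ^ 2 + 2 * p + 1 := by ring
    by_cases hcase : r ≤ (p + 1) ^ 2
    · obtain ⟨k, j, hk, hj, hkj⟩ := key r hcase
      refine ⟨(((k * (p + 1) : ℕ) : ZMod m), ((j : ℕ) : ZMod m)), ?_⟩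
      rw [Finset.mem_filter, Finset.mem_product]
      refine ⟨⟨Finset.mem_image_of_mem _ (hmem2 k hk), Finset.mem_image_of_mem _ (hmem1 j hj)⟩, ?_⟩
      rw [hkj]
      push_cast
      rw [← hrn]
      push_cast
      ring
    · -- use the negative: s = m - r
      have hs : m - r ≤ (p + 1) ^ 2 := by omega
      obtain ⟨k, j, hk, hj, hkj⟩ := key (m - r) hs
      refine ⟨(((j : ℕ) : ZMod m), ((k * (p + 1) : ℕ) : ZMod m)), ?_⟩
      rw [Finset.mem_filter, Finset.mem_product]
      refine ⟨⟨Finset.mem_image_of_mem _ (hmem1 j hj), Finset.mem_image_of_mem _ (hmem2 k hk)⟩, ?_⟩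
      have hneg : ((m - r : ℕ) : ZMod m) = - (r : ZMod m) := by
        rw [Nat.cast_sub hrm.le, ZMod.natCast_self]; ring
      rw [hkj]
      push_cast [Nat.cast_sub hrm.le] at hneg ⊢
      rw [← hrn]
      push_cast
      linear_combination -hneg
end

section
/- Let p be a prime greater than 11. Then there exists a subset A of Z_{2p²} with |A| ≤ 12p such that σ_A(n) ≥ 1 for every n ∈ Z_{2p²}. -/
theorem exists_basis_of_two_p_sq (p : ℕ) (hp : p.Prime) (hp11 : 11 < p) :
    ∃ A : Finset (ZMod (2 * p ^ 2)), A.card ≤ 12 * p ∧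
      ∀ n : ZMod (2 * p ^ 2), 1 ≤ ((A ×ˢ A).filter (fun q => q.1 + q.2 = n)).card := by
  have hp0 : 0 < p := hp.pos
  haveI : NeZero (2 * p ^ 2) := ⟨by positivity⟩
  set m := 2 * p ^ 2 with hm
  refine ⟨(Finset.range (2 * p)).image (fun i : ℕ => (i : ZMod m)) ∪
    (Finset.range p).image (fun j => ((2 * p * j : ℕ) : ZMod m)), ?_, ?_⟩
  · calc _ ≤ ((Finset.range (2 * p)).image (fun i : ℕ => (i : ZMod m))).card +
        ((Finset.range p).image (fun j => ((2 * p * j : ℕ) : ZMod m))).card :=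
          Finset.card_union_le _ _
    _ ≤ 2 * p + p := by
        gcongr <;> exact (Finset.card_image_le.trans (by simp))
    _ ≤ 12 * p := by omega
  · intro n
    rw [Nat.one_le_iff_ne_zero, ← Nat.pos_iff_ne_zero, Finset.card_pos]
    have hn : n.val < m := n.val_lt
    set q := n.val / (2 * p) with hq
    set r := n.val % (2 * p) with hr
    have hq' : q < p := by
      have : n.val < 2 * p * p := by
        have : m = 2 * p * p := by rw [hm]; ring
        omega
      exact Nat.div_lt_of_lt_mul this
    have hr' : r < 2 * p := Nat.mod_lt _ (by omega)
    refine ⟨(((2 * p * q : ℕ) : ZMod m), (r : ZMod m)), ?_⟩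
    rw [Finset.mem_filter]
    constructor
    · rw [Finset.mem_product]
      constructor
      · exact Finset.mem_union_right _ (Finset.mem_image.mpr ⟨q, Finset.mem_range.mpr hq', rfl⟩)
      · exact Finset.mem_union_left _ (Finset.mem_image.mpr ⟨r, Finset.mem_range.mpr hr', rfl⟩)
    · have : (2 * p * q + r : ℕ) = n.val := by
        rw [hq, hr]; exact Nat.div_add_mod _ _
      calc ((2 * p * q : ℕ) : ZMod m) + (r : ZMod m) = ((2 * p * q + r : ℕ) : ZMod m) := by
            push_cast; ring
        _ = (n.val : ZMod m) := by rw [this]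
        _ = n := by simp [ZMod.natCast_val, ZMod.cast_id]
end

section
/- Let g_m = min over all A ⊆ Z_m with δ_A(n) ≥ 1 for all n ∈ Z_m of m⁻¹ Σ_{n∈Z_m} δ_A(n). Then limsup_{m→∞} g_m ≤ 2. -/
/-- Key combinatorial lemma over ℕ: with `S = [0,k) ∪ {k,2k,…,Qk}`,
every `v` with `v/k + 1 ≤ Q` is a difference of two elements of `S`. -/
lemma nat_diff_cover (k Q v : ℕ) (hk : 0 < k) (hQv : v / k + 1 ≤ Q) :
    ∃ x ∈ Finset.range k ∪ (Finset.Icc 1 Q).image (· * k),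
    ∃ y ∈ Finset.range k ∪ (Finset.Icc 1 Q).image (· * k),
      y ≤ x ∧ x - y = v := by
  set q := v / k with hq
  set r := v % k with hr
  have hrk : r < k := Nat.mod_lt _ hk
  have hdm : k * q + r = v := Nat.div_add_mod v k
  refine ⟨(q + 1) * k, ?_, k - r, ?_, ?_, ?_⟩
  · refine Finset.mem_union_right _ (Finset.mem_image.mpr ⟨q + 1, ?_, rfl⟩)
    exact Finset.mem_Icc.mpr ⟨Nat.succ_le_succ (Nat.zero_le _), hQv⟩
  · rcases Nat.eq_zero_or_pos r with h0 | hpos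
    · refine Finset.mem_union_right _ (Finset.mem_image.mpr ⟨1, ?_, ?_⟩)
      · exact Finset.mem_Icc.mpr ⟨le_refl 1, le_trans (Nat.succ_le_succ (Nat.zero_le _)) hQv⟩
      · simp [h0]
    · exact Finset.mem_union_left _ (Finset.mem_range.mpr (by omega))
  · have : (q + 1) * k = k * q + k := by ring
    omega
  · have : (q + 1) * k = k * q + k := by ring
    omega

theorem limsup_g_le_2 :
    ∀ ε : ℝ, 0 < ε → ∃ M : ℕ, ∀ m : ℕ, M ≤ m →
      ∃ A : Finset (ZMod m),
        (∀ n : ZMod m, 1 ≤ ((A ×ˢ A).filter (fun q => q.1 - q.2 = n)).card) ∧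
        (A.card : ℝ) ^ 2 ≤ (2 + ε) * m := by
  intro ε hε
  obtain ⟨M₀, hM₀⟩ := exists_nat_ge (196 / ε ^ 2)
  refine ⟨max M₀ 36, fun m hm => ?_⟩
  have hm36 : 36 ≤ m := le_trans (le_max_right _ _) hm
  have hmM₀ : M₀ ≤ m := le_trans (le_max_left _ _) hm
  have hmpos : 0 < m := by omega
  haveI : NeZero m := ⟨by omega⟩
  -- parameters
  set L : ℕ := (m + 1) / 2 with hL
  set s : ℕ := Nat.sqrt L with hs
  set k : ℕ := s + 1 with hk
  set Q : ℕ := L / k + 1 with hQ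
  have hkpos : 0 < k := Nat.succ_pos _
  have hsL : s * s ≤ L := by
    have h := Nat.sqrt_le' L
    simpa [pow_two] using h
  have hLk : L < k * k := by
    have h := Nat.lt_succ_sqrt' L
    simpa [pow_two, Nat.succ_eq_add_one] using h
  have hQk : Q ≤ k := by
    have h1 : L / k < s + 1 := (Nat.div_lt_iff_lt_mul hkpos).mpr (by simpa [hk] using hLk)
    omega
  have hsm : s ≤ Nat.sqrt m := by
    apply Nat.sqrt_le_sqrt
    omega
  have h6 : 6 * Nat.sqrt m ≤ m := by
    have h1 : 6 ≤ Nat.sqrt m := Nat.le_sqrt.mpr (by omega)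
    have h2 : Nat.sqrt m * Nat.sqrt m ≤ m := by
      have h := Nat.sqrt_le' m
      simpa [pow_two] using h
    calc 6 * Nat.sqrt m ≤ Nat.sqrt m * Nat.sqrt m := Nat.mul_le_mul_right _ h1
    _ ≤ m := h2
  have hQkm : Q * k < m := by
    have h1 : Q * k ≤ k * k := Nat.mul_le_mul_right _ hQk
    have h2 : k * k = s * s + 2 * s + 1 := by ring
    omega
  -- the set
  set S : Finset ℕ := Finset.range k ∪ (Finset.Icc 1 Q).image (· * k) with hS
  set A : Finset (ZMod m) := S.image (Nat.cast) with hA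
  have hSbound : ∀ x ∈ S, x ≤ Q * k := by
    intro x hx
    rcases Finset.mem_union.mp hx with h | h
    · have ha1 : x < k := Finset.mem_range.mp h
      have ha2 : k ≤ Q * k := le_mul_of_one_le_left (Nat.zero_le _) (Nat.le_add_left 1 (L / k))
      omega
    · obtain ⟨i, hi, rfl⟩ := Finset.mem_image.mp h
      exact Nat.mul_le_mul_right _ (Finset.mem_Icc.mp hi).2
  -- coverage
  have hcover : ∀ n : ZMod m,
      1 ≤ ((A ×ˢ A).filter (fun q => q.1 - q.2 = n)).card := by
    intro n
    have key : ∀ v : ℕ, v ≤ L → ∃ a ∈ A, ∃ b ∈ A, a - b = (v : ZMod m) := by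
      intro v hv
      have hQv : v / k + 1 ≤ Q := by
        have : v / k ≤ L / k := Nat.div_le_div_right hv
        omega
      obtain ⟨x, hx, y, hy, hyx, hxy⟩ := nat_diff_cover k Q v hkpos hQv
      refine ⟨(x : ZMod m), Finset.mem_image.mpr ⟨x, hx, rfl⟩,
              (y : ZMod m), Finset.mem_image.mpr ⟨y, hy, rfl⟩, ?_⟩
      rw [← Nat.cast_sub hyx, hxy]
    have hvm : n.val < m := ZMod.val_lt n
    have hvn : ((n.val : ℕ) : ZMod m) = n := ZMod.natCast_rightInverse n
    obtain ⟨a, ha, b, hb, hab⟩ :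
        ∃ a ∈ A, ∃ b ∈ A, a - b = n := by
      rcases le_or_gt n.val L with hcase | hcase
      · obtain ⟨a, ha, b, hb, hab⟩ := key n.val hcase
        exact ⟨a, ha, b, hb, by rw [hab, hvn]⟩
      · set w : ℕ := m - n.val with hw
        have hwL : w ≤ L := by omega
        obtain ⟨a, ha, b, hb, hab⟩ := key w hwL
        refine ⟨b, hb, a, ha, ?_⟩
        have h1 : (w : ZMod m) + (n.val : ZMod m) = 0 := by
          rw [← Nat.cast_add]
          have : w + n.val = m := by omega
          rw [this, ZMod.natCast_self]
        have h2 : b - a = -(a - b) := by ring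
        rw [h2, hab, ← hvn]
        linear_combination -h1
    apply Finset.card_pos.mpr
    exact ⟨(a, b), Finset.mem_filter.mpr ⟨Finset.mem_product.mpr ⟨ha, hb⟩, hab⟩⟩
  refine ⟨A, hcover, ?_⟩
  -- cardinality bound
  have hcard : A.card ≤ 2 * (s + 1) := by
    calc A.card ≤ S.card := Finset.card_image_le
    _ ≤ (Finset.range k).card + ((Finset.Icc 1 Q).image (· * k)).card :=
        Finset.card_union_le _ _
    _ ≤ k + Q := by
        have h1 : (Finset.range k).card = k := Finset.card_range k
        have h2 : ((Finset.Icc 1 Q).image (· * k)).card ≤ Q := by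
          calc ((Finset.Icc 1 Q).image (· * k)).card ≤ (Finset.Icc 1 Q).card :=
              Finset.card_image_le
          _ = Q := by simp
        omega
    _ ≤ 2 * (s + 1) := by omega
  -- real arithmetic
  have hsqm : (Nat.sqrt m : ℝ) ≤ Real.sqrt m := by
    have h1 : ((Nat.sqrt m : ℝ)) ^ 2 ≤ (m : ℝ) := by
      exact_mod_cast Nat.sqrt_le' m
    have h2 := Real.sqrt_le_sqrt h1
    rwa [Real.sqrt_sq (by positivity)] at h2
  have hm' : (196 : ℝ) / ε ^ 2 ≤ (m : ℝ) := le_trans hM₀ (Nat.cast_le.mpr hmM₀)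
  have hsqrt14 : 14 / ε ≤ Real.sqrt m := by
    have h1 : ((14 : ℝ) / ε) ^ 2 ≤ (m : ℝ) := by
      rw [div_pow]
      calc (14 : ℝ) ^ 2 / ε ^ 2 = 196 / ε ^ 2 := by norm_num
      _ ≤ (m : ℝ) := hm'
    have h2 := Real.sqrt_le_sqrt h1
    rwa [Real.sqrt_sq (by positivity)] at h2
  have hss : Real.sqrt m * Real.sqrt m = (m : ℝ) := Real.mul_self_sqrt (by positivity)
  have h14 : 14 * Real.sqrt m ≤ ε * m := by
    have h1 := mul_le_mul_of_nonneg_right hsqrt14 (Real.sqrt_nonneg m)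
    rw [hss] at h1
    calc 14 * Real.sqrt m = ε * (14 / ε * Real.sqrt m) := by field_simp
    _ ≤ ε * m := mul_le_mul_of_nonneg_left h1 (le_of_lt hε)
  have hsq1 : (1 : ℝ) ≤ Real.sqrt m := by
    rw [show (1:ℝ) = Real.sqrt 1 from (Real.sqrt_one).symm]
    apply Real.sqrt_le_sqrt
    exact_mod_cast Nat.one_le_cast.mpr (by omega)
  have hcardR : (A.card : ℝ) ≤ 2 * ((s : ℝ) + 1) := by exact_mod_cast hcard
  have hsL' : ((s : ℝ)) * s ≤ (L : ℝ) := by exact_mod_cast hsL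
  have hLm : (L : ℝ) ≤ ((m : ℝ) + 1) / 2 := by
    have : 2 * L ≤ m + 1 := by omega
    have h := (Nat.cast_le (α := ℝ)).mpr this
    push_cast at h
    linarith
  have hsR : (s : ℝ) ≤ Real.sqrt m := le_trans (Nat.cast_le.mpr hsm) hsqm
  have hApos : (0 : ℝ) ≤ (A.card : ℝ) := Nat.cast_nonneg _
  nlinarith [sq_nonneg ((A.card : ℝ) - 2 * ((s:ℝ)+1)), hcardR, hsL', hLm, hsR, h14, hsq1,
    mul_le_mul hcardR hcardR hApos (by positivity : (0:ℝ) ≤ 2 * ((s:ℝ)+1))]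
end

section
/- Suppose A ⊆ Z_{m₁} with all elements represented by integers in [0, m₁-1], and m₂ = m₁ + r with 0 < r < m₁. Define B ⊆ Z_{m₂} as the image of A ∪ (A + r) (as integer sets) under reduction mod m₂. Then for every n with 0 ≤ n ≤ m₁ - 1 such that n ≡ a₁ + a₂ (mod m₁) for some a₁, a₂ ∈ A, there exist b₁, b₂ ∈ B with n ≡ b₁ + b₂ (mod m₂). -/
theorem shift_construction_covers (m₁ r : ℕ) (hr : 0 < r) (hrm : r < m₁)
    (A : Finset ℕ) (hA : ∀ a ∈ A, a ≤ m₁ - 1)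
    (B : Finset (ZMod (m₁ + r)))
    (hB : B = (A ∪ A.image (fun a => a + r)).image (fun a : ℕ => (a : ZMod (m₁ + r)))) :
    ∀ n : ℕ, n ≤ m₁ - 1 →
      (∃ a₁ ∈ A, ∃ a₂ ∈ A, n ≡ a₁ + a₂ [MOD m₁]) →
      ∃ b₁ ∈ B, ∃ b₂ ∈ B, (n : ZMod (m₁ + r)) = b₁ + b₂ := by
  intro n hn ⟨a₁, ha₁, a₂, ha₂, hmod⟩
  have hm₁ : 0 < m₁ := lt_trans hr hrm
  have hn' : n < m₁ := lt_of_le_of_lt hn (Nat.sub_lt hm₁ one_pos)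
  have ha₁' : a₁ < m₁ := lt_of_le_of_lt (hA a₁ ha₁) (Nat.sub_lt hm₁ one_pos)
  have ha₂' : a₂ < m₁ := lt_of_le_of_lt (hA a₂ ha₂) (Nat.sub_lt hm₁ one_pos)
  have hmemB : ∀ a ∈ A, (a : ZMod (m₁ + r)) ∈ B := by
    intro a ha
    rw [hB]
    exact Finset.mem_image_of_mem _ (Finset.mem_union_left _ ha)
  have hmemB' : ∀ a ∈ A, ((a + r : ℕ) : ZMod (m₁ + r)) ∈ B := by
    intro a ha
    rw [hB]
    exact Finset.mem_image_of_mem _ (Finset.mem_union_right _ (Finset.mem_image_of_mem _ ha))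
  have key : n = a₁ + a₂ ∨ n + m₁ = a₁ + a₂ := by
    have h1 : n % m₁ = (a₁ + a₂) % m₁ := hmod
    rw [Nat.mod_eq_of_lt hn'] at h1
    rcases Nat.lt_or_ge (a₁ + a₂) m₁ with h | h
    · left; rw [h1, Nat.mod_eq_of_lt h]
    · right
      have : (a₁ + a₂) % m₁ = a₁ + a₂ - m₁ := by
        rw [Nat.mod_eq_sub_mod h, Nat.mod_eq_of_lt (by omega)]
      omega
  rcases key with h | h
  · exact ⟨a₁, hmemB a₁ ha₁, a₂, hmemB a₂ ha₂, by rw [h]; push_cast; ring⟩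
  · refine ⟨a₁, hmemB a₁ ha₁, ((a₂ + r : ℕ) : ZMod (m₁ + r)), hmemB' a₂ ha₂, ?_⟩
    have : ((n + (m₁ + r) : ℕ) : ZMod (m₁ + r)) = ((a₁ + (a₂ + r) : ℕ) : ZMod (m₁ + r)) := by
      congr 1; omega
    have hz : ((m₁ : ZMod (m₁ + r)) + r) = 0 := by
      have := ZMod.natCast_self (m₁ + r); push_cast at this; exact this
    push_cast at this ⊢
    linear_combination this - hz
end

section
/- Let p be a prime. There exists a subset A of Z_{p²+p+1} and hence, for any m with (p²+p+1) < m < 2(p²+p+1), a subset B of Z_m with |B| ≤ 2(p+1) such that δ_B(n) ≥ 1 for all n ∈ Z_m. -/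
/-!
Singer's construction: `GF(p³)ˣ / GF(p)ˣ` is cyclic of order `N = p² + p + 1`, and its elements
are the points of the projective plane over `GF(p)`. The points of a line, i.e. the nonzero
vectors of a 2-dimensional `GF(p)`-subspace `H ⊆ GF(p³)`, form a perfect difference set: a
quotient `x / y = c` with `x, y ∈ H` forces `y ∈ H ∩ c⁻¹H`, and for `c ∉ GF(p)` this intersection
is a single projective point because `c` cannot stabilise `H` when `[GF(p³) : GF(p)]` is prime.
Counting pairs gives `|A| (|A| - 1) = N - 1`, so `|A| = p + 1`. Lifting `A ⊆ ℤ/N` to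
`{0, …, N-1}` and adjoining its shift by `r = m - N`, a difference that wraps around modulo `N`
is corrected by `±r` modulo `m = N + r`.
-/

open Module Finset
open scoped Pointwise

section Hyperplane

variable {F K : Type*} [Field F] [Field K] [Algebra F K]

theorem Submodule.eq_bot_or_eq_top_of_mul_mem (hK : (finrank F K).Prime) {c : K}
    (hc : c ∉ Set.range (algebraMap F K)) {V : Submodule F K} (hV : ∀ v ∈ V, c * v ∈ V) :
    V = ⊥ ∨ V = ⊤ := by
  have hadj : Algebra.adjoin F {c} = ⊤ := by
    refine ((Subalgebra.isSimpleOrder_of_finrank_prime F K hK).eq_bot_or_eq_top _).resolve_left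
      fun h => hc ?_
    exact Algebra.mem_bot.mp (h ▸ Algebra.self_mem_adjoin_singleton F c)
  have hmul : ∀ z : K, ∀ v ∈ V, z * v ∈ V := by
    intro z
    have hz : z ∈ Algebra.adjoin F {c} := hadj ▸ Algebra.mem_top
    induction hz using Algebra.adjoin_induction with
    | mem x hx => rw [Set.mem_singleton_iff.mp hx]; exact hV
    | algebraMap r => exact fun v hv => by rw [← Algebra.smul_def]; exact V.smul_mem r hv
    | add x y _ _ hx hy => exact fun v hv => by rw [add_mul]; exact V.add_mem (hx v hv) (hy v hv)
    | mul x y _ _ hx hy => exact fun v hv => by rw [mul_assoc]; exact hx _ (hy v hv)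
  refine or_iff_not_imp_left.mpr fun hne => eq_top_iff.mpr fun z _ => ?_
  obtain ⟨v, hv, hv0⟩ := V.ne_bot_iff.mp hne
  simpa [hv0] using hmul (z * v⁻¹) v hv

theorem finrank_inf_comap_mulLeft_add_two (hK : (finrank F K).Prime) {H : Submodule F K}
    (hH : finrank F H + 1 = finrank F K) {c : K} (hc : c ∉ Set.range (algebraMap F K)) :
    finrank F ↥(H ⊓ H.comap (LinearMap.mulLeft F c)) + 2 = finrank F K := by
  have : FiniteDimensional F K := Module.finite_of_finrank_pos hK.pos
  have hc0 : c ≠ 0 := fun h => hc ⟨0, by simp [h]⟩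
  have hcomap : finrank F (H.comap (LinearMap.mulLeft F c)) = finrank F H := by
    have : H.comap (LinearMap.mulLeft F c) =
        H.comap ((Units.mk0 c hc0).mulLeftLinearEquiv F K : K →ₗ[F] K) := rfl
    rw [this, Submodule.comap_equiv_eq_map_symm, LinearEquiv.finrank_map_eq]
  have hsup := Submodule.finrank_le (H ⊔ H.comap (LinearMap.mulLeft F c))
  have hsum := Submodule.finrank_sup_add_finrank_inf_eq H (H.comap (LinearMap.mulLeft F c))
  have hlt : H ⊓ H.comap (LinearMap.mulLeft F c) < H := by
    refine lt_of_le_of_ne inf_le_left fun heq => ?_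
    have hstable : ∀ v ∈ H, c * v ∈ H := fun v hv => by rw [← heq] at hv; exact hv.2
    rcases Submodule.eq_bot_or_eq_top_of_mul_mem hK hc hstable with h | h
    · rw [h, finrank_bot] at hH; exact hK.one_lt.ne hH
    · rw [h, finrank_top] at hH; omega
  have := Submodule.finrank_lt_finrank_of_lt hlt
  omega

end Hyperplane

section Projectivization

variable {F K : Type*} [Field F] [Field K] [Algebra F K]

theorem mem_range_unitsMap_algebraMap_iff {x : Kˣ} :
    x ∈ (Units.map (algebraMap F K : F →* K)).range ↔ (x : K) ∈ Set.range (algebraMap F K) := by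
  refine ⟨fun ⟨u, hu⟩ => ⟨u, by rw [← hu]; rfl⟩, fun ⟨r, hr⟩ => ?_⟩
  have hr0 : r ≠ 0 := by rintro rfl; exact x.ne_zero (by simp [← hr])
  exact ⟨Units.mk0 r hr0, Units.ext hr⟩

theorem exists_monoidHom_zmod_surjective_ker [Finite K] {N : ℕ}
    (hN : N * (Nat.card F - 1) = Nat.card K - 1) :
    ∃ ψ : Kˣ →* Multiplicative (ZMod N), Function.Surjective ψ ∧
      ∀ x, ψ x = 1 ↔ (x : K) ∈ Set.range (algebraMap F K) := by
  set U := (Units.map (algebraMap F K : F →* K)).range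
  have : Finite F := Finite.of_injective _ (algebraMap F K).injective
  have hU : Nat.card U = Nat.card F - 1 := by
    rw [← Nat.card_units F]
    exact Nat.card_congr
      (MonoidHom.ofInjective (Units.map_injective (algebraMap F K).injective)).toEquiv.symm
  have hQ : Nat.card (Kˣ ⧸ U) = N := by
    have h := U.card_eq_card_quotient_mul_card_subgroup
    rw [Nat.card_units, hU, ← hN] at h
    exact (Nat.eq_of_mul_eq_mul_right (Nat.sub_pos_of_lt Finite.one_lt_card) h).symm
  have := isCyclic_of_surjective _ (QuotientGroup.mk'_surjective U)
  let e : Kˣ ⧸ U ≃* Multiplicative (ZMod N) :=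
    mulEquivOfCyclicCardEq (by rw [hQ, Nat.card_congr Multiplicative.toAdd, Nat.card_zmod])
  refine ⟨e.toMonoidHom.comp (QuotientGroup.mk' U),
    e.surjective.comp (QuotientGroup.mk'_surjective U), fun x => ?_⟩
  rw [MonoidHom.comp_apply, MulEquiv.coe_toMonoidHom, map_eq_one_iff _ e.injective,
    QuotientGroup.mk'_apply, QuotientGroup.eq_one_iff, mem_range_unitsMap_algebraMap_iff]

end Projectivization

section SingerSet

variable {F K G : Type*} [Field F] [Field K] [Algebra F K] [AddCommGroup G]
  {ψ : Kˣ →* Multiplicative G}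

theorem eq_iff_exists_smul_of_ker (hψ : ∀ x, ψ x = 1 ↔ (x : K) ∈ Set.range (algebraMap F K))
    {x y : Kˣ} : ψ x = ψ y ↔ ∃ r : F, (y : K) = r • (x : K) := by
  rw [← inv_mul_eq_one, ← map_inv, ← map_mul, hψ]
  refine exists_congr fun r => ?_
  rw [Algebra.smul_def, Units.val_mul, Units.val_inv_eq_inv_val, eq_inv_mul_iff_mul_eq₀ x.ne_zero,
    eq_comm, mul_comm (x : K)]

variable [Fintype G]

open scoped Classical in
noncomputable def singerSet (ψ : Kˣ →* Multiplicative G) (H : Submodule F K) : Finset G :=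
  Finset.univ.filter fun a => ∃ u : Kˣ, (u : K) ∈ H ∧ (ψ u).toAdd = a

theorem mem_singerSet {H : Submodule F K} {a : G} :
    a ∈ singerSet ψ H ↔ ∃ u : Kˣ, (u : K) ∈ H ∧ (ψ u).toAdd = a := by
  simp [singerSet]

theorem card_filter_sub_singerSet_eq_one [DecidableEq G] (hψ_surj : Function.Surjective ψ)
    (hψ : ∀ x, ψ x = 1 ↔ (x : K) ∈ Set.range (algebraMap F K)) {H : Submodule F K}
    (hH : ∀ c : K, c ∉ Set.range (algebraMap F K) →
      finrank F ↥(H ⊓ H.comap (LinearMap.mulLeft F c)) = 1)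
    {n : G} (hn : n ≠ 0) :
    ((singerSet ψ H ×ˢ singerSet ψ H).filter (fun q => q.1 - q.2 = n)).card = 1 := by
  obtain ⟨c, hc⟩ := hψ_surj (Multiplicative.ofAdd n)
  have hcF : (c : K) ∉ Set.range (algebraMap F K) := fun h => hn <| by
    simpa [hc] using (hψ c).2 h
  set W := H ⊓ H.comap (LinearMap.mulLeft F (c : K))
  have hW : finrank F W = 1 := hH c hcF
  obtain ⟨w, hwW, hw0⟩ := W.exists_mem_ne_zero_of_ne_bot fun h => by
    rw [h, finrank_bot] at hW; exact zero_ne_one hW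
  have hW_span := (finrank_eq_one_iff_of_nonzero' ⟨w, hwW⟩ (by simpa using hw0)).mp hW
  set y₀ := Units.mk0 w hw0
  rw [Finset.card_eq_one]
  refine ⟨((ψ (c * y₀)).toAdd, (ψ y₀).toAdd), Finset.eq_singleton_iff_unique_mem.mpr ⟨?_, ?_⟩⟩
  · simp only [Finset.mem_filter, Finset.mem_product, mem_singerSet]
    exact ⟨⟨⟨c * y₀, hwW.2, rfl⟩, ⟨y₀, hwW.1, rfl⟩⟩, by simp [hc]⟩
  · rintro ⟨a, b⟩ hab
    simp only [Finset.mem_filter, Finset.mem_product, mem_singerSet] at hab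
    obtain ⟨⟨⟨x, hxH, rfl⟩, ⟨y, hyH, rfl⟩⟩, hxy⟩ := hab
    have hx : ψ x = ψ (c * y) := by
      rw [map_mul, hc, ← ofAdd_toAdd (ψ x), ← ofAdd_toAdd (ψ y), ← ofAdd_add, ← hxy,
        sub_add_cancel]
    obtain ⟨r, hr⟩ := (eq_iff_exists_smul_of_ker hψ).mp hx
    have hcyH : (c : K) * y ∈ H := by rw [← Units.val_mul, hr]; exact H.smul_mem r hxH
    have hyW : (y : K) ∈ W := ⟨hyH, hcyH⟩
    obtain ⟨s, hs⟩ := hW_span ⟨y, hyW⟩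
    have hy : ψ y₀ = ψ y :=
      (eq_iff_exists_smul_of_ker hψ).mpr ⟨s, (congrArg Subtype.val hs).symm⟩
    rw [hx, map_mul, map_mul ψ, hy]

end SingerSet

section DifferenceCount

variable {G : Type*} [AddCommGroup G] [DecidableEq G]

theorem one_le_card_filter_sub_iff {B : Finset G} {n : G} :
    1 ≤ ((B ×ˢ B).filter (fun q => q.1 - q.2 = n)).card ↔ n ∈ B - B := by
  rw [Nat.one_le_iff_ne_zero, card_ne_zero, mem_sub]
  simp [Finset.Nonempty, and_assoc]

variable {A : Finset G}
  (hA : ∀ n ≠ 0, ((A ×ˢ A).filter (fun q => q.1 - q.2 = n)).card = 1)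
include hA

theorem card_mul_card_eq_of_card_filter_sub_eq_one [Fintype G] :
    A.card * A.card = A.card + (Fintype.card G - 1) := by
  have hfib := card_eq_sum_card_fiberwise (f := fun q : G × G => q.1 - q.2) (s := A ×ˢ A)
    (t := univ) fun _ _ => mem_univ _
  rw [card_product, ← add_sum_erase _ _ (mem_univ 0),
    sum_congr rfl fun n hn => hA n (ne_of_mem_erase hn), sum_const, card_erase_of_mem (mem_univ _),
    card_univ, smul_eq_mul, mul_one] at hfib
  simpa only [sub_eq_zero, ← diag_eq_filter, diag_card] using hfib

theorem forall_mem_sub_self_of_card_filter_sub_eq_one [Nontrivial G] (n : G) : n ∈ A - A := by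
  have hmem : ∀ n ≠ 0, n ∈ A - A := fun n hn => one_le_card_filter_sub_iff.mp (hA n hn).ge
  rcases eq_or_ne n 0 with rfl | hn
  · obtain ⟨g, hg⟩ := exists_ne (0 : G)
    obtain ⟨a, ha, -⟩ := mem_sub.mp (hmem g hg)
    exact mem_sub.mpr ⟨a, ha, a, ha, sub_self a⟩
  · exact hmem n hn

end DifferenceCount

namespace ZMod

variable {N m : ℕ}

theorem natCast_val_sub_natCast_val_eq_or [NeZero N] (hNm : N ≤ m) (a b : ZMod N) :
    (a.val : ZMod m) - b.val = (a - b).val ∨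
      (a.val : ZMod m) - b.val = (a - b).val + (m - N : ℕ) := by
  obtain ⟨u, rfl⟩ : ∃ u, a = u + b := ⟨a - b, (sub_add_cancel a b).symm⟩
  rw [add_sub_cancel_right]
  rcases lt_or_ge (u.val + b.val) N with h | h
  · left
    rw [val_add_of_lt h]
    push_cast
    ring
  · right
    have hcast := congrArg (Nat.cast : ℕ → ZMod m) (val_add_val_of_le h)
    rw [Nat.cast_add, Nat.cast_add] at hcast
    rw [Nat.cast_sub hNm, natCast_self]
    linear_combination -hcast

def shiftUnion (A : Finset (ZMod N)) (m : ℕ) : Finset (ZMod m) :=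
  A.image (fun a => (a.val : ZMod m)) ∪ A.image (fun a => (a.val + (m - N : ℕ) : ZMod m))

theorem card_shiftUnion_le (A : Finset (ZMod N)) : (shiftUnion A m).card ≤ 2 * A.card :=
  (card_union_le _ _).trans (by rw [two_mul]; exact add_le_add card_image_le card_image_le)

theorem mem_shiftUnion_sub_self [NeZero N] {A : Finset (ZMod N)} (hA : ∀ u, u ∈ A - A)
    (hNm : N ≤ m) (hm : m ≤ 2 * N) (t : ZMod m) : t ∈ shiftUnion A m - shiftUnion A m := by
  have hmem : ∀ a ∈ A, (a.val : ZMod m) ∈ shiftUnion A m ∧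
      (a.val + (m - N : ℕ) : ZMod m) ∈ shiftUnion A m := fun a ha =>
    ⟨mem_union_left _ (mem_image_of_mem _ ha), mem_union_right _ (mem_image_of_mem _ ha)⟩
  have hcover : ∀ u : ZMod N, (u.val : ZMod m) ∈ shiftUnion A m - shiftUnion A m ∧
      (u.val + (m - N : ℕ) : ZMod m) ∈ shiftUnion A m - shiftUnion A m := by
    intro u
    obtain ⟨a, ha, b, hb, rfl⟩ := mem_sub.mp (hA u)
    rcases natCast_val_sub_natCast_val_eq_or hNm a b with h | h
    · rw [← h, sub_add_eq_add_sub]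
      exact ⟨sub_mem_sub (hmem a ha).1 (hmem b hb).1, sub_mem_sub (hmem a ha).2 (hmem b hb).1⟩
    · rw [← h, eq_sub_of_add_eq h.symm, sub_sub]
      exact ⟨sub_mem_sub (hmem a ha).1 (hmem b hb).2, sub_mem_sub (hmem a ha).1 (hmem b hb).1⟩
  have : NeZero m := ⟨by have := NeZero.ne N; omega⟩
  obtain ⟨T, hT, rfl⟩ : ∃ T < m, (T : ZMod m) = t := ⟨t.val, val_lt t, natCast_zmod_val t⟩
  rcases lt_or_ge T N with hTN | hTN
  · have := (hcover (T : ZMod N)).1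
    rwa [val_natCast_of_lt hTN] at this
  · have := (hcover ((T - (m - N) : ℕ) : ZMod N)).2
    rwa [val_natCast_of_lt (by omega), ← Nat.cast_add, Nat.sub_add_cancel (by omega)] at this

end ZMod

theorem exists_singer_difference_set (p : ℕ) [Fact p.Prime] :
    ∃ A : Finset (ZMod (p ^ 2 + p + 1)), ∀ n ≠ 0,
      ((A ×ˢ A).filter (fun q => q.1 - q.2 = n)).card = 1 := by
  have hK : finrank (ZMod p) (GaloisField p 3) = 3 := GaloisField.finrank p three_ne_zero
  have hcard : (p ^ 2 + p + 1) * (Nat.card (ZMod p) - 1) = Nat.card (GaloisField p 3) - 1 := by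
    have hp : 1 ≤ p := (Fact.out : p.Prime).one_lt.le
    have hp3 : 1 ≤ p ^ 3 := Nat.one_le_pow _ _ hp
    rw [Nat.card_zmod, GaloisField.card p 3 three_ne_zero]
    zify [hp, hp3]
    ring
  obtain ⟨ψ, hψ_surj, hψ⟩ := exists_monoidHom_zmod_surjective_ker hcard
  obtain ⟨f, hf⟩ :=
    Projective.exists_dual_ne_zero (ZMod p) (one_ne_zero : (1 : GaloisField p 3) ≠ 0)
  have hH := f.finrank_ker_add_one_of_ne_zero fun h => hf (by simp [h])
  refine ⟨singerSet ψ (LinearMap.ker f), fun n hn => card_filter_sub_singerSet_eq_one hψ_surj hψ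
    (fun c hc => ?_) hn⟩
  have := finrank_inf_comap_mulLeft_add_two (by rw [hK]; exact Nat.prime_three) hH hc
  omega

theorem singer_and_transfer (p : ℕ) (hp : p.Prime) :
    ∃ A : Finset (ZMod (p ^ 2 + p + 1)),
      (∀ n : ZMod (p ^ 2 + p + 1), n ≠ 0 →
        ((A ×ˢ A).filter (fun q => q.1 - q.2 = n)).card = 1) ∧
      ∀ m : ℕ, p ^ 2 + p + 1 < m → m < 2 * (p ^ 2 + p + 1) →
        ∃ B : Finset (ZMod m), B.card ≤ 2 * (p + 1) ∧
          ∀ n : ZMod m, 1 ≤ ((B ×ˢ B).filter (fun q => q.1 - q.2 = n)).card := by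
  have : Fact p.Prime := ⟨hp⟩
  have : Fact (1 < p ^ 2 + p + 1) := ⟨by nlinarith [hp.two_le]⟩
  obtain ⟨A, hA⟩ := exists_singer_difference_set p
  have hA_card : A.card ≤ p + 1 := by
    have := card_mul_card_eq_of_card_filter_sub_eq_one hA
    rw [ZMod.card, Nat.add_sub_cancel] at this
    nlinarith
  have hA_sub := forall_mem_sub_self_of_card_filter_sub_eq_one hA
  refine ⟨A, hA, fun m hm₁ hm₂ => ⟨ZMod.shiftUnion A m, ?_, fun n => ?_⟩⟩
  · exact (ZMod.card_shiftUnion_le A).trans (by omega)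
  · exact one_le_card_filter_sub_iff.mpr (ZMod.mem_shiftUnion_sub_self hA_sub hm₁.le hm₂.le n)
end

section
/- For all sufficiently large m, there exists a subset B of Z_m with |B| ≤ 24·√(m/(2)) + O(1) ≤ 12√(2m)(1+o(1)) such that every element of Z_m is a sum of two elements of B; in particular |B|² ≤ (144 + o(1))·m. -/
theorem exists_small_basis_large_m :
    ∀ ε : ℝ, 0 < ε → ∃ M : ℕ, ∀ m : ℕ, M ≤ m →
      ∃ B : Finset (ZMod m),
        (∀ n : ZMod m, 1 ≤ ((B ×ˢ B).filter (fun q => q.1 + q.2 = n)).card) ∧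
        (B.card : ℝ) ^ 2 ≤ (144 + ε) * m := by
  intro ε hε
  refine ⟨1, fun m hm => ?_⟩
  have hm0 : 0 < m := hm
  haveI : NeZero m := ⟨hm0.ne'⟩
  set k := m.sqrt + 1 with hk
  have hkpos : 0 < k := Nat.succ_pos _
  have hmk : m < k * k := by simpa [pow_two, hk] using Nat.lt_succ_sqrt' m
  set B0 : Finset ℕ := Finset.range k ∪ (Finset.range k).image (· * k) with hB0
  refine ⟨B0.image (Nat.cast : ℕ → ZMod m), ?_, ?_⟩
  · intro n
    rw [Nat.one_le_iff_ne_zero, ← Nat.pos_iff_ne_zero, Finset.card_pos]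
    have hval : n.val < m := ZMod.val_lt n
    set r := n.val % k
    set q := n.val / k
    have hr : r < k := Nat.mod_lt _ hkpos
    have hq : q < k := Nat.div_lt_iff_lt_mul hkpos |>.2 (hval.trans hmk)
    refine ⟨((r : ZMod m), ((q * k : ℕ) : ZMod m)), ?_⟩
    simp only [Finset.mem_filter, Finset.mem_product, Finset.mem_image]
    refine ⟨⟨⟨r, ?_, rfl⟩, ⟨q * k, ?_, rfl⟩⟩, ?_⟩
    · exact Finset.mem_union_left _ (Finset.mem_range.2 hr)
    · exact Finset.mem_union_right _ (Finset.mem_image.2 ⟨q, Finset.mem_range.2 hq, rfl⟩)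
    · have : (r : ZMod m) + (q * k : ℕ) = ((r + q * k : ℕ) : ZMod m) := by push_cast; ring
      rw [this]
      have hdm : r + q * k = n.val := by
        have := Nat.mod_add_div n.val k
        simpa [mul_comm] using this
      rw [hdm, ZMod.natCast_zmod_val]
  · have hcard : (B0.image (Nat.cast : ℕ → ZMod m)).card ≤ 2 * k := by
      calc (B0.image (Nat.cast : ℕ → ZMod m)).card ≤ B0.card := Finset.card_image_le
        _ ≤ (Finset.range k).card + ((Finset.range k).image (· * k)).card :=
            Finset.card_union_le _ _
        _ ≤ k + k := by
            gcongr
            · simp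
            · exact (Finset.card_image_le).trans (by simp)
        _ = 2 * k := (two_mul k).symm
    have hnat : (B0.image (Nat.cast : ℕ → ZMod m)).card ^ 2 ≤ 144 * m := by
      have hs : m.sqrt * m.sqrt ≤ m := by simpa [pow_two] using Nat.sqrt_le' m
      have hsm : m.sqrt ≤ m := Nat.sqrt_le_self m
      calc (B0.image (Nat.cast : ℕ → ZMod m)).card ^ 2 ≤ (2 * k) ^ 2 := by
            exact Nat.pow_le_pow_left hcard 2
        _ ≤ 144 * m := by
            rw [hk]
            nlinarith [hm0]
    have : ((B0.image (Nat.cast : ℕ → ZMod m)).card : ℝ) ^ 2 ≤ 144 * m := by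
      exact_mod_cast hnat
    have hεm : (0 : ℝ) ≤ ε * m := mul_nonneg hε.le (by positivity)
    nlinarith
end
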